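/- There exists a family of epistemic programs Π₁, Π₂, ... with size of Πₙ in O(n) such that G₀(Πₙ) has at least 2ⁿ stable models while G₁(Πₙ) has exactly one stable model; in particular 2ⁿ · |SM(G₁(Πₙ))| ≤ |SM(G₀(Πₙ))|. -/

import Mathlib

/-! Framework for (epistemic) logic programs:
objective literals, rules, programs, reducts, stable models,
subjective literals, subjective reducts, worldviews, and the
generate-and-test programs T₀, G₀, kp, G₁. -/

/-- Extended objective literals over an atom type `α`:
an atom, a negated atom, a doubly negated atom, or a truth constant. -/
inductive Lit (α : Type) : Type
  | pos (a : α)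
  | neg (a : α)
  | nneg (a : α)
  | top
  | bot

namespace Lit

/-- Satisfaction of an extended objective literal by an interpretation. -/
def sat {α : Type} (I : Set α) : Lit α → Prop
  | .pos a => a ∈ I
  | .neg a => a ∉ I
  | .nneg a => a ∈ I
  | .top => True
  | .bot => False

/-- A literal is negated if it is of the form `¬a` or `¬¬a`. -/
def isNeg {α : Type} : Lit α → Prop
  | .neg _ => True
  | .nneg _ => True
  | _ => False

/-- Rename atoms in a literal. -/
def map {α β : Type} (f : α → β) : Lit α → Lit β
  | .pos a => .pos (f a)
  | .neg a => .neg (f a)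
  | .nneg a => .nneg (f a)
  | .top => .top
  | .bot => .bot

/-- The atoms occurring in a literal. -/
def atoms {α : Type} : Lit α → Set α
  | .pos a => {a}
  | .neg a => {a}
  | .nneg a => {a}
  | _ => ∅

end Lit

/-- An objective rule `a₁ ∨ ... ∨ aₙ ← L₁,...,Lₘ`. -/
structure Rule (α : Type) where
  head : Set α
  body : Set (Lit α)

/-- An objective program: a set of rules. -/
abbrev Program (α : Type) := Set (Rule α)

/-- A rule is satisfied by `I` if `I` satisfies some head atom
whenever it satisfies all body literals. -/
def Rule.sat {α : Type} (I : Set α) (r : Rule α) : Prop :=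
  (∀ L ∈ r.body, L.sat I) → ∃ a ∈ r.head, a ∈ I

/-- A model of a program satisfies all its rules. -/
def isModel {α : Type} (I : Set α) (P : Program α) : Prop := ∀ r ∈ P, r.sat I

/-- The reduct of a program with respect to `I`: drop rules with an unsatisfied
negated body literal; delete negated literals from the remaining rules. -/
def reduct {α : Type} (P : Program α) (I : Set α) : Program α :=
  { r' | ∃ r ∈ P, (∀ L ∈ r.body, L.isNeg → L.sat I) ∧
      r' = ⟨r.head, {L | L ∈ r.body ∧ ¬ L.isNeg}⟩ }

/-- `I` is a stable model of `P` iff it is a ⊆-minimal model of the reduct `P^I`. -/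
def isStable {α : Type} (P : Program α) (I : Set α) : Prop :=
  isModel I (reduct P I) ∧ ∀ J ⊆ I, isModel J (reduct P I) → J = I

/-- The set of stable models of a program. -/
def SM {α : Type} (P : Program α) : Set (Set α) := { I | isStable P I }

/-- A program extended with assumption constraints `⊥ ← ¬a` (for `a ∈ Apos`)
and `⊥ ← a` (for `a ∈ Aneg`). -/
def withAssumption {α : Type} (P : Program α) (Apos Aneg : Set α) : Program α :=
  P ∪ ((fun a => (⟨∅, {Lit.neg a}⟩ : Rule α)) '' Apos)
    ∪ ((fun a => (⟨∅, {Lit.pos a}⟩ : Rule α)) '' Aneg)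

/-- Stable models of `P` under an assumption. -/
def SMA {α : Type} (P : Program α) (Apos Aneg : Set α) : Set (Set α) :=
  SM (withAssumption P Apos Aneg)

/-- Literals of epistemic programs: an objective literal, or a subjective
atom `K l` preceded by zero, one, or two negations. -/
inductive SLit (α : Type) : Type
  | obj (l : Lit α)
  | k (l : Lit α)
  | nk (l : Lit α)
  | nnk (l : Lit α)

/-- An epistemic rule. -/
structure ERule (α : Type) where
  head : Set α
  body : Set (SLit α)

/-- An epistemic program: a set of epistemic rules. -/
abbrev EProgram (α : Type) := Set (ERule α)

/-- `W ⊨ K l`: every interpretation in `W` satisfies `l`. -/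
def satK {α : Type} (W : Set (Set α)) (l : Lit α) : Prop := ∀ I ∈ W, l.sat I

open scoped Classical in
/-- Replace a subjective literal by `⊤`/`⊥` according to `W`; objective
literals are unchanged. -/
noncomputable def SLit.reduce {α : Type} (W : Set (Set α)) : SLit α → Lit α
  | .obj l => l
  | .k l => if satK W l then .top else .bot
  | .nk l => if satK W l then .bot else .top
  | .nnk l => if satK W l then .top else .bot

/-- The subjective reduct `P^W`. -/
noncomputable def subjReduct {α : Type} (P : EProgram α) (W : Set (Set α)) : Program α :=
  (fun r : ERule α => (⟨r.head, (SLit.reduce W) '' r.body⟩ : Rule α)) '' P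

/-- A worldview: a non-empty set of interpretations `W` with `W = SM(P^W)`. -/
def isWorldview {α : Type} (P : EProgram α) (W : Set (Set α)) : Prop :=
  W.Nonempty ∧ W = SM (subjReduct P W)

/-- Normal-form subjective literals: `K a`, `¬K a`, `¬¬K a` with `a` an atom. -/
def SLit.isNormal {α : Type} : SLit α → Prop
  | .obj _ => True
  | .k (.pos _) => True
  | .nk (.pos _) => True
  | .nnk (.pos _) => True
  | _ => False

/-- A program is in normal form if negation does not occur in the scope of `K`. -/
def isNormalForm {α : Type} (P : EProgram α) : Prop :=
  ∀ r ∈ P, ∀ L ∈ r.body, L.isNormal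

/-- The atoms `a` such that a subjective atom `K a` occurs in the program; the
corresponding fresh atoms `ka` are represented as `Sum.inr a`. -/
def KAtoms {α : Type} (P : EProgram α) : Set α :=
  { a | ∃ r ∈ P, SLit.k (Lit.pos a) ∈ r.body ∨ SLit.nk (Lit.pos a) ∈ r.body ∨
        SLit.nnk (Lit.pos a) ∈ r.body }

/-- Replace subjective literals on `K a` by objective literals on the fresh
atom `ka = Sum.inr a`; original atoms become `Sum.inl a`. -/
def SLit.t0 {α : Type} : SLit α → Lit (α ⊕ α)
  | .obj l => l.map Sum.inl
  | .k (.pos a) => .pos (Sum.inr a)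
  | .nk (.pos a) => .neg (Sum.inr a)
  | .nnk (.pos a) => .nneg (Sum.inr a)
  | _ => .bot

/-- The tester program `T₀(P)`: `k(P)` plus a choice rule `{ka}`
(i.e. `ka ← ¬¬ka`) for each `ka ∈ K(P)`. -/
def T0 {α : Type} (P : EProgram α) : Program (α ⊕ α) :=
  ((fun r : ERule α => (⟨Sum.inl '' r.head, SLit.t0 '' r.body⟩ : Rule (α ⊕ α))) '' P)
  ∪ ((fun a => (⟨{Sum.inr a}, {Lit.nneg (Sum.inr a)}⟩ : Rule (α ⊕ α))) '' KAtoms P)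

/-- The generator program `G₀(P)`: `T₀(P)` plus consistency constraints
`⊥ ← ka, ¬a` for each `ka ∈ K(P)`. -/
def G0 {α : Type} (P : EProgram α) : Program (α ⊕ α) :=
  T0 P ∪ ((fun a => (⟨∅, {Lit.pos (Sum.inr a), Lit.neg (Sum.inl a)}⟩ : Rule (α ⊕ α))) '' KAtoms P)

/-- `k(M) = M ∩ K(P)`, read as a set of original atoms. -/
def kOfM {α : Type} (M : Set (α ⊕ α)) : Set α := { a | Sum.inr a ∈ M }

/-- `k(W) = {ka ∈ K(P) : W ⊨ K a}`, read as a set of original atoms. -/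
def kOfW {α : Type} (P : EProgram α) (W : Set (Set α)) : Set α :=
  { a | a ∈ KAtoms P ∧ ∀ I ∈ W, a ∈ I }

/-- Restriction of an interpretation to the original atoms `At(P)`. -/
def restr {α : Type} (M : Set (α ⊕ α)) : Set α := { a | Sum.inl a ∈ M }

/-- The positive part of the assumption determined by a set `S` of K-atoms:
`ka` for each `ka ∈ K(P)` with `a ∈ S`. -/
def asmP {α : Type} (P : EProgram α) (S : Set α) : Set (α ⊕ α) := Sum.inr '' (S ∩ KAtoms P)

/-- The negative part of the assumption determined by a set `S` of K-atoms:
`¬ka` for each `ka ∈ K(P)` with `a ∉ S`. -/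
def asmN {α : Type} (P : EProgram α) (S : Set α) : Set (α ⊕ α) := Sum.inr '' (KAtoms P \ S)

/-- A generator program for `P`. -/
def isGenerator {α : Type} (P : EProgram α) (G : Program (α ⊕ α)) : Prop :=
  (∀ W, isWorldview P W → ∃ M ∈ SM G, kOfM M = kOfW P W ∧ restr M ∈ W) ∧
  (∀ M ∈ SM G, ∀ W : Set (Set α), kOfW P W = kOfM M → restr M ∈ SM (subjReduct P W))

/-- A tester program for `P`: a non-empty `W` is a worldview of `P` iff
`W` equals the restriction to `At(P)` of `SM(T; k(W))`. -/
def isTester {α : Type} (P : EProgram α) (T : Program (α ⊕ α)) : Prop :=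
  ∀ W : Set (Set α), W.Nonempty →
    (isWorldview P W ↔ W = restr '' SMA T (asmP P (kOfW P W)) (asmN P (kOfW P W)))

/-- Atoms of the extended signature for the propagation program: original
atoms and `ka`-atoms (left) plus fresh atoms `kp_a`, `kn_a`, `kn_r` (right). -/
abbrev PExt (α : Type) : Type := (α ⊕ α) ⊕ (α ⊕ (α ⊕ ERule α))

/-- An original atom `a` in the extended signature. -/
def aE {α : Type} (a : α) : PExt α := Sum.inl (Sum.inl a)

/-- The atom `ka` in the extended signature. -/
def kaE {α : Type} (a : α) : PExt α := Sum.inl (Sum.inr a)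

/-- The fresh propagation atom `kp_a`. -/
def kpA {α : Type} (a : α) : PExt α := Sum.inr (Sum.inl a)

/-- The fresh propagation atom `kn_a`. -/
def knA {α : Type} (a : α) : PExt α := Sum.inr (Sum.inr (Sum.inl a))

/-- The fresh propagation atom `kn_r` for a rule `r`. -/
def knR {α : Type} (r : ERule α) : PExt α := Sum.inr (Sum.inr (Sum.inr r))

/-- Translation of a body literal for the rules defining `kp_a`. -/
def SLit.kpBody {α : Type} : SLit α → Lit (PExt α)
  | .obj (.pos a) => .pos (kpA a)
  | .obj (.neg a) => .pos (knA a)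
  | .k (.pos a) => .pos (kaE a)
  | .nk (.pos a) => .neg (kaE a)
  | .nnk (.pos a) => .nneg (kaE a)
  | _ => .bot

/-- Translation of a body literal for the rules defining `kn_r`
(the "complement" of the literal). -/
def SLit.knBody {α : Type} : SLit α → Lit (PExt α)
  | .obj (.pos a) => .pos (knA a)
  | .obj (.neg a) => .pos (kpA a)
  | .k (.pos a) => .neg (kaE a)
  | .nk (.pos a) => .pos (kaE a)
  | .nnk (.pos a) => .neg (kaE a)
  | _ => .top

/-- The atoms occurring in a subjective literal. -/
def SLit.atoms {α : Type} : SLit α → Set α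
  | .obj l => l.atoms
  | .k l => l.atoms
  | .nk l => l.atoms
  | .nnk l => l.atoms

/-- The atoms occurring in an epistemic program. -/
def AtE {α : Type} (P : EProgram α) : Set α :=
  { a | ∃ r ∈ P, a ∈ r.head ∨ ∃ L ∈ r.body, a ∈ L.atoms }

/-- The epistemic-propagation program `kp(P)`:
rules `kp_{a} ← ...` for single-atom-head rules, rules `kn_r ← ...` for all
rules, and completion rules `kn_a ← kn_{r₁},...,kn_{rₖ}`. -/
def kpProg {α : Type} (P : EProgram α) : Program (PExt α) :=
  { r' | ∃ r ∈ P, ∃ a : α, r.head = {a} ∧ r' = ⟨{kpA a}, SLit.kpBody '' r.body⟩ }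
  ∪ { r' | ∃ r ∈ P, ∃ L ∈ r.body, r' = ⟨{knR r}, {L.knBody}⟩ }
  ∪ { r' | ∃ a ∈ AtE P,
        r' = ⟨{knA a}, (fun r => Lit.pos (knR r)) '' { r ∈ P | a ∈ r.head }⟩ }

/-- Rename the atoms of a rule. -/
def Rule.mapAtoms {α β : Type} (f : α → β) (r : Rule α) : Rule β :=
  ⟨f '' r.head, (Lit.map f) '' r.body⟩

/-- `G₀(P)` viewed over the extended signature. -/
def G0ext {α : Type} (P : EProgram α) : Program (PExt α) :=
  (Rule.mapAtoms Sum.inl) '' (G0 P)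

/-- The generator program `G₁(P)`: `G₀(P)` together with the propagation
program `kp(P)` and consistency constraints `⊥ ← kp_a, ¬ka`. -/
def G1 {α : Type} (P : EProgram α) : Program (PExt α) :=
  G0ext P ∪ kpProg P
  ∪ { r' | ∃ a ∈ KAtoms P, r' = ⟨∅, {Lit.pos (kpA a), Lit.neg (kaE a)}⟩ }

/-- A fixed countable signature: atoms `aᵢ` (`Sum.inl (Sum.inl i)`),
`n_aᵢ` (`Sum.inl (Sum.inr i)`) and `g` (`Sum.inr ()`). -/
abbrev A19 : Type := (ℕ ⊕ ℕ) ⊕ Unit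

/-!
In `G₀(Πₙ)` the guesses `kn_aᵢ` for `K n_aᵢ` (the atoms `kaE (naAt i)`, not `knA (naAt i)`)
are restricted only by `⊥ ← kn_aᵢ, ¬n_aᵢ`, so every `M ⊆ {a₁,…,aₙ}` yields the stable model
`M ∪ {n_aᵢ, kn_aᵢ : aᵢ ∉ M} ∪ {g : M ≠ ∅}`, and these are pairwise distinct. In `G₁(Πₙ)` the
constraint `⊥ ← kg` makes `kg` false, so `⊥ ← kp_g, ¬kg` makes `kp_g` false, hence every `kp_aᵢ`
is false; the rules `kp_aᵢ ← ¬kn_aᵢ` then force every `kn_aᵢ`, and `⊥ ← kn_aᵢ, ¬n_aᵢ` forces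
every `n_aᵢ`. This leaves only the model with `M = ∅` on the atoms of `G₀(Πₙ)`, and the remaining
atoms of `kp(Πₙ)` are determined by forward chaining.
-/

open Set

lemma Set.setOf_exists_mem_eq_eq_image {α β : Type*} (s : Set α) (f : α → β) :
    {b | ∃ a ∈ s, b = f a} = f '' s := by
  ext; simp [eq_comm]

section StableModels

variable {α : Type}

lemma Lit.sat_mono {I J : Set α} (hIJ : I ⊆ J) {L : Lit α} (hL : ¬ L.isNeg) :
    L.sat I → L.sat J := by
  cases L <;> simp_all [Lit.sat, Lit.isNeg]
  exact fun h => hIJ h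

lemma Lit.isNeg_map {β : Type} (f : α → β) (L : Lit α) : (L.map f).isNeg ↔ L.isNeg := by
  cases L <;> rfl

lemma Lit.sat_map {β : Type} (f : α → β) (I : Set β) (L : Lit α) :
    (L.map f).sat I ↔ L.sat (f ⁻¹' I) := by
  cases L <;> rfl

lemma isModel_reduct_iff {P : Program α} {I J : Set α} :
    isModel J (reduct P I) ↔ ∀ r ∈ P, (∀ L ∈ r.body, L.isNeg → L.sat I) →
      (∀ L ∈ r.body, ¬ L.isNeg → L.sat J) → ∃ a ∈ r.head, a ∈ J := by
  constructor
  · exact fun h r hr hneg hpos =>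
      h ⟨r.head, {L | L ∈ r.body ∧ ¬ L.isNeg}⟩ ⟨r, hr, hneg, rfl⟩ fun L hL => hpos L hL.1 hL.2
  · rintro h _ ⟨r, hr, hneg, rfl⟩ hpos
    exact h r hr hneg fun L hL hL' => hpos L ⟨hL, hL'⟩

lemma isModel_reduct_union {P Q : Program α} {I J : Set α} :
    isModel J (reduct (P ∪ Q) I) ↔ isModel J (reduct P I) ∧ isModel J (reduct Q I) := by
  simp only [isModel_reduct_iff, mem_union, or_imp, forall_and]

lemma isModel_reduct_image_mapAtoms {β : Type} (f : α → β) {P : Program α} {I J : Set β} :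
    isModel J (reduct (Rule.mapAtoms f '' P) I) ↔ isModel (f ⁻¹' J) (reduct P (f ⁻¹' I)) := by
  simp [isModel_reduct_iff, Rule.mapAtoms, Lit.isNeg_map, Lit.sat_map]

lemma isStable.subset_biUnion_head {P : Program α} {M : Set α} (h : isStable P M) :
    M ⊆ ⋃ r ∈ P, r.head := by
  suffices M ∩ ⋃ r ∈ P, r.head = M from this ▸ inter_subset_right
  refine h.2 _ inter_subset_left (isModel_reduct_iff.2 fun r hr hneg hpos => ?_)
  obtain ⟨a, ha, haM⟩ := isModel_reduct_iff.1 h.1 r hr hneg fun L hL hL' =>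
    Lit.sat_mono inter_subset_left hL' (hpos L hL hL')
  exact ⟨a, ha, haM, mem_biUnion hr ha⟩

lemma SM_finite {P : Program α} (hP : P.Finite) (hhead : ∀ r ∈ P, r.head.Finite) :
    (SM P).Finite :=
  (hP.biUnion hhead).finite_subsets.subset fun _ hM => hM.subset_biUnion_head

end StableModels

section Family

def aAt (i : ℕ) : A19 := .inl (.inl i)
def naAt (i : ℕ) : A19 := .inl (.inr i)
def gAt : A19 := .inr ()

@[simp] lemma aAt_inj {i j : ℕ} : aAt i = aAt j ↔ i = j := by simp [aAt]
@[simp] lemma naAt_inj {i j : ℕ} : naAt i = naAt j ↔ i = j := by simp [naAt]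
@[simp] lemma aAt_ne_naAt (i j : ℕ) : aAt i ≠ naAt j := by simp [aAt, naAt]
@[simp] lemma naAt_ne_aAt (i j : ℕ) : naAt i ≠ aAt j := by simp [aAt, naAt]
@[simp] lemma aAt_ne_gAt (i : ℕ) : aAt i ≠ gAt := by simp [aAt, gAt]
@[simp] lemma gAt_ne_aAt (i : ℕ) : gAt ≠ aAt i := by simp [aAt, gAt]
@[simp] lemma naAt_ne_gAt (i : ℕ) : naAt i ≠ gAt := by simp [naAt, gAt]
@[simp] lemma gAt_ne_naAt (i : ℕ) : gAt ≠ naAt i := by simp [naAt, gAt]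

def ruleA (i : ℕ) : ERule A19 := ⟨{aAt i}, {.nk (.pos (naAt i))}⟩
def ruleN (i : ℕ) : ERule A19 := ⟨{naAt i}, {.obj (.neg (aAt i))}⟩
def ruleG (i : ℕ) : ERule A19 := ⟨{gAt}, {.obj (.pos (aAt i))}⟩
def ruleK : ERule A19 := ⟨∅, {.k (.pos gAt)}⟩

def piProg (n : ℕ) : EProgram A19 :=
  ruleA '' Iio n ∪ ruleN '' Iio n ∪ ruleG '' Iio n ∪ {ruleK}

variable {n : ℕ}

lemma mem_piProg {r : ERule A19} :
    r ∈ piProg n ↔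
      (∃ i < n, ruleA i = r) ∨ (∃ i < n, ruleN i = r) ∨ (∃ i < n, ruleG i = r) ∨ r = ruleK := by
  simp only [piProg, mem_union, mem_image, mem_singleton_iff, mem_Iio, or_assoc]

lemma exists_mem_piProg {p : ERule A19 → Prop} :
    (∃ r ∈ piProg n, p r) ↔
      (∃ i < n, p (ruleA i)) ∨ (∃ i < n, p (ruleN i)) ∨ (∃ i < n, p (ruleG i)) ∨ p ruleK := by
  simp only [mem_piProg, or_and_right, exists_or, exists_exists_and_eq_and, exists_eq_left]

lemma ncard_piProg_le (n : ℕ) : (piProg n).ncard ≤ 3 * n + 1 := by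
  have hA := ncard_image_le (f := ruleA) (finite_Iio n)
  have hN := ncard_image_le (f := ruleN) (finite_Iio n)
  have hG := ncard_image_le (f := ruleG) (finite_Iio n)
  have hAN := ncard_union_le (ruleA '' Iio n) (ruleN '' Iio n)
  have hANG := ncard_union_le (ruleA '' Iio n ∪ ruleN '' Iio n) (ruleG '' Iio n)
  have hANGK := ncard_union_le (ruleA '' Iio n ∪ ruleN '' Iio n ∪ ruleG '' Iio n) {ruleK}
  rw [ncard_Iio_nat] at hA hN hG
  rw [ncard_singleton] at hANGK
  unfold piProg
  omega

lemma KAtoms_piProg : KAtoms (piProg n) = naAt '' Iio n ∪ {gAt} := by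
  ext x
  simp [KAtoms, exists_mem_piProg, ruleA, ruleN, ruleG, ruleK, eq_comm, or_comm]

lemma AtE_piProg : AtE (piProg n) = aAt '' Iio n ∪ naAt '' Iio n ∪ {gAt} := by
  ext x
  simp only [AtE, mem_ofPred_eq, exists_mem_piProg, ruleA, ruleN, ruleG, ruleK, SLit.atoms,
    Lit.atoms, mem_singleton_iff, exists_eq_left, mem_empty_iff_false, false_or]
  aesop

lemma sep_aAt_mem_head_piProg {i : ℕ} (hi : i < n) :
    {r ∈ piProg n | aAt i ∈ r.head} = {ruleA i} := by
  ext r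
  aesop (add norm simp [mem_piProg, ruleA, ruleN, ruleG, ruleK])

lemma sep_naAt_mem_head_piProg {i : ℕ} (hi : i < n) :
    {r ∈ piProg n | naAt i ∈ r.head} = {ruleN i} := by
  ext r
  aesop (add norm simp [mem_piProg, ruleA, ruleN, ruleG, ruleK])

lemma sep_gAt_mem_head_piProg : {r ∈ piProg n | gAt ∈ r.head} = ruleG '' Iio n := by
  ext r
  aesop (add norm simp [mem_piProg, ruleA, ruleN, ruleG, ruleK])

end Family

section G0StableModels
open Sum

variable {n : ℕ} {S : Set ℕ}

lemma G0_piProg : G0 (piProg n) =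
    (fun i => (⟨{inl (aAt i)}, {.neg (inr (naAt i))}⟩ : Rule (A19 ⊕ A19))) '' Iio n
    ∪ (fun i => ⟨{inl (naAt i)}, {.neg (inl (aAt i))}⟩) '' Iio n
    ∪ (fun i => ⟨{inl gAt}, {.pos (inl (aAt i))}⟩) '' Iio n
    ∪ {⟨∅, {.pos (inr gAt)}⟩}
    ∪ (fun i => ⟨{inr (naAt i)}, {.nneg (inr (naAt i))}⟩) '' Iio n
    ∪ {⟨{inr gAt}, {.nneg (inr gAt)}⟩}
    ∪ (fun i => ⟨∅, {.pos (inr (naAt i)), .neg (inl (naAt i))}⟩) '' Iio n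
    ∪ {⟨∅, {.pos (inr gAt), .neg (inl gAt)}⟩} := by
  rw [G0, T0, KAtoms_piProg]
  simp only [piProg, image_union, image_image, image_singleton, ruleA, ruleN, ruleG, ruleK,
    SLit.t0, Lit.map, image_empty, union_assoc]

lemma isModel_reduct_G0_piProg_iff {I J : Set (A19 ⊕ A19)} :
    isModel J (reduct (G0 (piProg n)) I) ↔
      (∀ i < n, inr (naAt i) ∉ I → inl (aAt i) ∈ J) ∧
      (∀ i < n, inl (aAt i) ∉ I → inl (naAt i) ∈ J) ∧
      (∀ i < n, inl (aAt i) ∈ J → inl gAt ∈ J) ∧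
      inr gAt ∉ J ∧
      (∀ i < n, inr (naAt i) ∈ I → inr (naAt i) ∈ J) ∧
      (inr gAt ∈ I → inr gAt ∈ J) ∧
      (∀ i < n, inl (naAt i) ∉ I → inr (naAt i) ∉ J) ∧
      (inl gAt ∉ I → inr gAt ∉ J) := by
  simp only [isModel_reduct_iff, G0_piProg, mem_union, or_imp, forall_and, forall_mem_image,
    mem_singleton_iff, forall_eq, forall_mem_insert, exists_eq_left, Lit.isNeg, Lit.sat, mem_Iio]
  simp [and_assoc]

def g0Model (n : ℕ) (S : Set ℕ) : Set (A19 ⊕ A19) :=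
  {x | (∃ i ∈ S, x = inl (aAt i)) ∨ (∃ i ∈ Iio n \ S, x = inl (naAt i) ∨ x = inr (naAt i))
    ∨ (x = inl gAt ∧ S.Nonempty)}

@[simp] lemma inl_aAt_mem_g0Model {i : ℕ} : inl (aAt i) ∈ g0Model n S ↔ i ∈ S := by
  simp [g0Model]

@[simp] lemma inl_naAt_mem_g0Model {i : ℕ} : inl (naAt i) ∈ g0Model n S ↔ i < n ∧ i ∉ S := by
  simp [g0Model]

@[simp] lemma inr_naAt_mem_g0Model {i : ℕ} : inr (naAt i) ∈ g0Model n S ↔ i < n ∧ i ∉ S := by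
  simp [g0Model]

@[simp] lemma inl_gAt_mem_g0Model : inl gAt ∈ g0Model n S ↔ S.Nonempty := by
  simp [g0Model]

@[simp] lemma inr_gAt_notMem_g0Model : inr gAt ∉ g0Model n S := by
  simp [g0Model]

lemma g0Model_empty_subset_iff {J : Set (A19 ⊕ A19)} :
    g0Model n ∅ ⊆ J ↔ ∀ i < n, inl (naAt i) ∈ J ∧ inr (naAt i) ∈ J := by
  refine ⟨fun h i hi => ⟨h (inl_naAt_mem_g0Model.2 ⟨hi, notMem_empty i⟩),
    h (inr_naAt_mem_g0Model.2 ⟨hi, notMem_empty i⟩)⟩, ?_⟩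
  rintro h x (⟨i, hi, -⟩ | ⟨i, ⟨hi, -⟩, rfl | rfl⟩ | ⟨-, hne⟩)
  · exact absurd hi (notMem_empty i)
  · exact (h i hi).1
  · exact (h i hi).2
  · exact absurd hne not_nonempty_empty

lemma isStable_g0Model (hS : S ⊆ Iio n) : isStable (G0 (piProg n)) (g0Model n S) := by
  refine ⟨?_, fun J hJ hJmod => hJ.antisymm ?_⟩
  · rw [isModel_reduct_G0_piProg_iff]
    simpa +contextual using fun i (_ : i < n) (hi : i ∈ S) => nonempty_of_mem hi
  · obtain ⟨hA, hN, hG, -, hK, -⟩ := isModel_reduct_G0_piProg_iff.1 hJmod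
    rintro x (⟨i, hi, rfl⟩ | ⟨i, ⟨hin, hiS⟩, rfl | rfl⟩ | ⟨rfl, i, hi⟩)
    · exact hA i (hS hi) (by simp [hi])
    · exact hN i hin (by simpa)
    · exact hK i hin (inr_naAt_mem_g0Model.2 ⟨hin, hiS⟩)
    · exact hG i (hS hi) (hA i (hS hi) (by simp [hi]))

lemma g0Model_injective : Function.Injective (g0Model n) := fun S T h => ext fun i => by
  rw [← inl_aAt_mem_g0Model (n := n), h, inl_aAt_mem_g0Model]

lemma SM_G0_piProg_finite : (SM (G0 (piProg n))).Finite := by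
  refine SM_finite ?_ ?_ <;> rw [G0_piProg]
  · exact toFinite _
  · simp [or_imp, forall_and]

lemma two_pow_le_ncard_SM_G0_piProg : 2 ^ n ≤ (SM (G0 (piProg n))).ncard :=
  calc 2 ^ n = (𝒫 Iio n).ncard := by simp
    _ ≤ (SM (G0 (piProg n))).ncard :=
      ncard_le_ncard_of_injOn _ (fun _ hS => isStable_g0Model hS) g0Model_injective.injOn
        SM_G0_piProg_finite

end G0StableModels

section G1StableModel
open Sum

variable {n : ℕ}

lemma kpProg_piProg : kpProg (piProg n) =
    (fun i => (⟨{kpA (aAt i)}, {.neg (kaE (naAt i))}⟩ : Rule (PExt A19))) '' Iio n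
    ∪ (fun i => ⟨{kpA (naAt i)}, {.pos (knA (aAt i))}⟩) '' Iio n
    ∪ (fun i => ⟨{kpA gAt}, {.pos (kpA (aAt i))}⟩) '' Iio n
    ∪ ((fun i => ⟨{knR (ruleA i)}, {.pos (kaE (naAt i))}⟩) '' Iio n
    ∪ (fun i => ⟨{knR (ruleN i)}, {.pos (kpA (aAt i))}⟩) '' Iio n
    ∪ (fun i => ⟨{knR (ruleG i)}, {.pos (knA (aAt i))}⟩) '' Iio n
    ∪ {⟨{knR ruleK}, {.neg (kaE gAt)}⟩})
    ∪ ((fun i => ⟨{knA (aAt i)}, {.pos (knR (ruleA i))}⟩) '' Iio n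
    ∪ (fun i => ⟨{knA (naAt i)}, {.pos (knR (ruleN i))}⟩) '' Iio n
    ∪ {⟨{knA gAt}, (fun i => .pos (knR (ruleG i))) '' Iio n⟩}) := by
  unfold kpProg
  congr 1
  congr 1
  · ext r
    simp only [mem_ofPred_eq, exists_mem_piProg, ruleA, ruleN, ruleG, ruleK, SLit.kpBody,
      singleton_eq_singleton_iff, exists_eq_left, empty_ne_singleton, mem_union, mem_image,
      mem_Iio, image_singleton, false_and, exists_false, or_false, or_assoc, eq_comm]
  · ext r
    simp only [mem_ofPred_eq, exists_mem_piProg, mem_union, mem_image, mem_singleton_iff, mem_Iio,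
      or_assoc, eq_comm]
    simp [ruleA, ruleN, ruleG, ruleK, SLit.knBody]
  · rw [setOf_exists_mem_eq_eq_image, AtE_piProg]
    simp only [image_union, image_singleton, sep_gAt_mem_head_piProg, image_image]
    congr 2 <;> refine image_congr fun i hi => ?_
    · rw [sep_aAt_mem_head_piProg hi, image_singleton]
    · rw [sep_naAt_mem_head_piProg hi, image_singleton]

lemma isModel_reduct_kpProg_piProg_iff {I J : Set (PExt A19)} :
    isModel J (reduct (kpProg (piProg n)) I) ↔
      (∀ i < n, kaE (naAt i) ∉ I → kpA (aAt i) ∈ J) ∧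
      (∀ i < n, knA (aAt i) ∈ J → kpA (naAt i) ∈ J) ∧
      (∀ i < n, kpA (aAt i) ∈ J → kpA gAt ∈ J) ∧
      (∀ i < n, kaE (naAt i) ∈ J → knR (ruleA i) ∈ J) ∧
      (∀ i < n, kpA (aAt i) ∈ J → knR (ruleN i) ∈ J) ∧
      (∀ i < n, knA (aAt i) ∈ J → knR (ruleG i) ∈ J) ∧
      (kaE gAt ∉ I → knR ruleK ∈ J) ∧
      (∀ i < n, knR (ruleA i) ∈ J → knA (aAt i) ∈ J) ∧
      (∀ i < n, knR (ruleN i) ∈ J → knA (naAt i) ∈ J) ∧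
      ((∀ i < n, knR (ruleG i) ∈ J) → knA gAt ∈ J) := by
  simp only [isModel_reduct_iff, kpProg_piProg, mem_union, or_imp, forall_and, forall_mem_image,
    mem_singleton_iff, forall_eq, exists_eq_left, Lit.isNeg, Lit.sat, mem_Iio]
  simp [and_assoc]

lemma isModel_reduct_G1_piProg_iff {I J : Set (PExt A19)} :
    isModel J (reduct (G1 (piProg n)) I) ↔
      isModel (inl ⁻¹' J) (reduct (G0 (piProg n)) (inl ⁻¹' I)) ∧
      isModel J (reduct (kpProg (piProg n)) I) ∧
      (∀ i < n, kaE (naAt i) ∉ I → kpA (naAt i) ∉ J) ∧ (kaE gAt ∉ I → kpA gAt ∉ J) := by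
  rw [G1, isModel_reduct_union, isModel_reduct_union, G0ext, isModel_reduct_image_mapAtoms,
    and_assoc]
  refine and_congr Iff.rfl (and_congr Iff.rfl ?_)
  rw [setOf_exists_mem_eq_eq_image, KAtoms_piProg]
  simp only [isModel_reduct_iff, mem_union, or_imp, forall_and, forall_mem_image,
    mem_singleton_iff, forall_eq, forall_mem_insert, Lit.isNeg, Lit.sat, mem_Iio]
  simp

def g1Model (n : ℕ) : Set (PExt A19) :=
  inl '' g0Model n ∅ ∪ {x | (∃ i < n, x = kpA (naAt i) ∨ x = knA (aAt i) ∨ x = knR (ruleA i) ∨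
    x = knR (ruleG i)) ∨ x = knA gAt ∨ x = knR ruleK}

@[simp] lemma preimage_inl_g1Model : inl ⁻¹' g1Model n = g0Model n ∅ := by
  ext x
  simp [g1Model, kpA, knA, knR]

@[simp] lemma aE_mem_g1Model {x : A19} : aE x ∈ g1Model n ↔ inl x ∈ g0Model n ∅ :=
  Set.ext_iff.1 preimage_inl_g1Model (inl x)

@[simp] lemma kaE_mem_g1Model {x : A19} : kaE x ∈ g1Model n ↔ inr x ∈ g0Model n ∅ :=
  Set.ext_iff.1 preimage_inl_g1Model (inr x)

@[simp] lemma kpA_mem_g1Model {x : A19} : kpA x ∈ g1Model n ↔ ∃ i < n, x = naAt i := by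
  simp [g1Model, kpA, knA, knR]

@[simp] lemma knA_mem_g1Model {x : A19} :
    knA x ∈ g1Model n ↔ (∃ i < n, x = aAt i) ∨ x = gAt := by
  simp [g1Model, kpA, knA, knR]

@[simp] lemma knR_mem_g1Model {r : ERule A19} :
    knR r ∈ g1Model n ↔ (∃ i < n, r = ruleA i ∨ r = ruleG i) ∨ r = ruleK := by
  simp [g1Model, kpA, knA, knR]

lemma isModel_g1Model_reduct {I : Set (PExt A19)} (hka : ∀ i < n, kaE (naAt i) ∈ I)
    (ha : ∀ i < n, aE (naAt i) ∈ I) (hkg : kaE gAt ∉ I) :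
    isModel (g1Model n) (reduct (G1 (piProg n)) I) := by
  rw [isModel_reduct_G1_piProg_iff, preimage_inl_g1Model, isModel_reduct_G0_piProg_iff,
    isModel_reduct_kpProg_piProg_iff]
  simp only [kaE, aE] at hka ha hkg
  simp +contextual [ruleA, ruleN, ruleG, ruleK, kaE, hka, ha, hkg]

lemma g1Model_subset {I J : Set (PExt A19)} (hJ : isModel J (reduct (G1 (piProg n)) I))
    (hkg : kaE gAt ∉ I) (h0 : g0Model n ∅ ⊆ inl ⁻¹' J) : g1Model n ⊆ J := by
  obtain ⟨-, hkp, -⟩ := isModel_reduct_G1_piProg_iff.1 hJ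
  obtain ⟨-, hkpN, -, hknRA, -, hknRG, hknRK, hknA, -, hknG⟩ :=
    isModel_reduct_kpProg_piProg_iff.1 hkp
  have hknR : ∀ i < n, knR (ruleA i) ∈ J := fun i hi =>
    hknRA i hi (g0Model_empty_subset_iff.1 h0 i hi).2
  have hknAa : ∀ i < n, knA (aAt i) ∈ J := fun i hi => hknA i hi (hknR i hi)
  rintro x (⟨y, hy, rfl⟩ | ⟨i, hi, rfl | rfl | rfl | rfl⟩ | rfl | rfl)
  · exact h0 hy
  · exact hkpN i hi (hknAa i hi)
  · exact hknAa i hi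
  · exact hknR i hi
  · exact hknRG i hi (hknAa i hi)
  · exact hknG fun i hi => hknRG i hi (hknAa i hi)
  · exact hknRK hkg

lemma isStable_g1Model : isStable (G1 (piProg n)) (g1Model n) := by
  have hkg : kaE gAt ∉ g1Model n := by simp
  refine ⟨isModel_g1Model_reduct (by simp) (by simp) hkg, fun J hJ hJmod =>
    hJ.antisymm (g1Model_subset hJmod hkg ?_)⟩
  have hJ0 := (isModel_reduct_G1_piProg_iff.1 hJmod).1
  rw [preimage_inl_g1Model] at hJ0
  exact ((isStable_g0Model (empty_subset _)).2 _
    (preimage_inl_g1Model (n := n) ▸ preimage_mono hJ) hJ0).ge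

lemma eq_g1Model_of_isStable {M : Set (PExt A19)} (h : isStable (G1 (piProg n)) M) :
    M = g1Model n := by
  obtain ⟨hG0, hkp, -, hcG⟩ := isModel_reduct_G1_piProg_iff.1 h.1
  obtain ⟨-, -, -, hkg, -, -, hcons, -⟩ := isModel_reduct_G0_piProg_iff.1 hG0
  obtain ⟨hkpA, -, hkpG, -⟩ := isModel_reduct_kpProg_piProg_iff.1 hkp
  have hka : ∀ i < n, kaE (naAt i) ∈ M := fun i hi =>
    by_contra fun hi' => hcG hkg (hkpG i hi (hkpA i hi hi'))
  have ha : ∀ i < n, aE (naAt i) ∈ M := fun i hi =>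
    by_contra fun hi' => hcons i hi hi' (hka i hi)
  have h0 : g0Model n ∅ ⊆ inl ⁻¹' M :=
    g0Model_empty_subset_iff.2 fun i hi => ⟨ha i hi, hka i hi⟩
  exact (h.2 _ (g1Model_subset h.1 hkg h0) (isModel_g1Model_reduct hka ha hkg)).symm

lemma SM_G1_piProg : SM (G1 (piProg n)) = {g1Model n} :=
  Set.ext fun _ => ⟨eq_g1Model_of_isStable, fun h => h ▸ isStable_g1Model⟩

end G1StableModel

/-- there is a family of epistemic programs `Πₙ` of size `O(n)`
such that `G₀(Πₙ)` has at least `2ⁿ` stable models while `G₁(Πₙ)` has exactly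
one; in particular `2ⁿ · |SM(G₁(Πₙ))| ≤ |SM(G₀(Πₙ))|`. -/
theorem exponential_family :
    ∃ Pi : ℕ → EProgram A19,
      (∃ C : ℕ, ∀ n : ℕ, (Pi n).ncard ≤ C * n + C)
      ∧ ∀ n : ℕ,
          2 ^ n ≤ (SM (G0 (Pi n))).ncard
          ∧ (∃! M, M ∈ SM (G1 (Pi n)))
          ∧ 2 ^ n * (SM (G1 (Pi n))).ncard ≤ (SM (G0 (Pi n))).ncard := by
  refine ⟨piProg, ⟨3, fun n => (ncard_piProg_le n).trans (by omega)⟩, fun n => ?_⟩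
  rw [SM_G1_piProg, ncard_singleton, mul_one]
  exact ⟨two_pow_le_ncard_SM_G0_piProg, ⟨g1Model n, rfl, fun _ => id⟩,
    two_pow_le_ncard_SM_G0_piProg⟩
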